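/- arXiv:2009.10694 — 3 statements merged into one kernel-verified Lean document; each statement's English description precedes it below -/
import Mathlib

section
/- Let R be a local principal ideal domain of prime characteristic p > 0 with maximal ideal generated by π. For any integers n, m ≥ 0 and any e ≥ 0, the map sending (Frobenius-pushforward of x) ⊗ y to the Frobenius-pushforward of x·y^(p^e) gives an R-module isomorphism F^e_*⟨π^n⟩ ⊗_R ⟨π^m⟩ ≅ F^e_*⟨π^(n+m·p^e)⟩. -/
open Classical TensorProduct

noncomputable section

/-- The Frobenius pushforward `F^e_* M`: the module `M` with scalars restricted along the
`e`-th iterate of the Frobenius endomorphism of `R`. -/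
def FrobMod (R : Type*) [CommSemiring R] (p : ℕ) [ExpChar R p] (e : ℕ)
    (M : Type*) [AddCommMonoid M] [Module R M] : Type _ := M

namespace FrobMod

variable {R : Type*} [CommSemiring R] {p : ℕ} [ExpChar R p] {e : ℕ}
variable {M : Type*} [AddCommMonoid M] [Module R M]

instance : AddCommMonoid (FrobMod R p e M) := inferInstanceAs (AddCommMonoid M)

instance {M : Type*} [AddCommGroup M] [Module R M] : AddCommGroup (FrobMod R p e M) :=
  inferInstanceAs (AddCommGroup M)

instance : Module R (FrobMod R p e M) := Module.compHom M (iterateFrobenius R p e)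

/-- The canonical map `M → F^e_* M`, `m ↦ F^e_* m`. -/
def mk (R : Type*) [CommSemiring R] (p : ℕ) [ExpChar R p] (e : ℕ)
    {M : Type*} [AddCommMonoid M] [Module R M] : M → FrobMod R p e M := id

/-- The inverse of `FrobMod.mk`. -/
def un {R : Type*} [CommSemiring R] {p : ℕ} [ExpChar R p] {e : ℕ}
    {M : Type*} [AddCommMonoid M] [Module R M] : FrobMod R p e M → M := id

end FrobMod

/-- `M` (up to isomorphism) is a direct summand of `C`. -/
def IsDirectSummand (R : Type*) [Ring R] (M : Type*) [AddCommGroup M] [Module R M]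
    (C : Type*) [AddCommGroup C] [Module R C] : Prop :=
  ∃ P Q : Submodule R C, IsCompl P Q ∧ Nonempty (P ≃ₗ[R] M)

/-- `a^M(C)`: the maximal number of copies of `M` appearing in a direct sum
decomposition of `C`. -/
def maxCopies (R : Type*) [Ring R] (M : Type*) [AddCommGroup M] [Module R M]
    (C : Type*) [AddCommGroup C] [Module R C] : ℕ :=
  sSup {a : ℕ | IsDirectSummand R (Fin a → M) C}

/-- The free rank of `N`: the maximal rank of a free direct summand of `N`. -/
def freeRank (R : Type*) [Ring R] (N : Type*) [AddCommGroup N] [Module R N] : ℕ :=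
  maxCopies R R N

/-- The generic rank of a module over a domain. -/
def genRank (R : Type*) [CommRing R] (M : Type*) [AddCommGroup M] [Module R M] : ℕ :=
  Module.finrank (FractionRing R) (LocalizedModule (nonZeroDivisors R) M)

/-- `R` is strongly `F`-regular. -/
def StronglyFRegular (R : Type*) [CommRing R] (p : ℕ) [ExpChar R p] : Prop :=
  ∀ r : R, r ≠ 0 → ∃ e : ℕ, ∃ φ : FrobMod R p e R →ₗ[R] R, φ (FrobMod.mk R p e r) = 1

/-- `R` is `F`-finite. -/
def FFinite (R : Type*) [CommRing R] (p : ℕ) [ExpChar R p] : Prop :=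
  ∀ e : ℕ, Module.Finite R (FrobMod R p e R)

/-- The height one primes of `R`. -/
def HeightOnePrime (R : Type*) [CommRing R] : Type _ :=
  {P : PrimeSpectrum R // Order.height P = 1}

/-- The order of vanishing of `a : R` at the prime `P`, defined via symbolic powers:
the largest `n` with `a ∈ P^n R_P ∩ R`. -/
def ordAt (R : Type*) [CommRing R] (P : PrimeSpectrum R) (a : R) : ℕ :=
  haveI := P.isPrime
  sSup {n : ℕ | a ∈ (Ideal.map (algebraMap R (Localization.AtPrime P.asIdeal))
      (P.asIdeal ^ n)).comap (algebraMap R (Localization.AtPrime P.asIdeal))}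

/-- The valuation `ν_P(f)` of an element `f` of the fraction field `K` at a height one
prime `P`, computed as `ν_P(a) - ν_P(b)` for a representation `f = a/b`. -/
def valAt (R : Type*) [CommRing R] (K : Type*) [CommRing K] [Algebra R K]
    (P : PrimeSpectrum R) (f : K) : ℤ :=
  if h : ∃ ab : R × R, ab.2 ≠ 0 ∧ f * algebraMap R K ab.2 = algebraMap R K ab.1 then
    (ordAt R P h.choose.1 : ℤ) - (ordAt R P h.choose.2 : ℤ)
  else 0

/-- A Weil divisor on `Spec R`: an element of the free abelian group on height one primes. -/
abbrev WeilDivisor (R : Type*) [CommRing R] : Type _ := HeightOnePrime R →₀ ℤ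

/-- The underlying set `{f ∈ K^× ∣ div(f) + D ≥ 0} ∪ {0}` of the divisorial ideal `R(D)`. -/
def divisorialSet (R : Type*) [CommRing R] (K : Type*) [CommRing K] [Algebra R K]
    (D : WeilDivisor R) : Set K :=
  {f | f = 0 ∨ ∀ P : HeightOnePrime R, 0 ≤ valAt R K P.1 f + D P}

/-- The divisorial ideal `R(D) ⊆ K`, as an `R`-submodule of `K`.  (For a Noetherian
normal domain `R` the spanning set `divisorialSet` is already an `R`-submodule, so that
this is literally `{f ∈ K^× ∣ div(f) + D ≥ 0} ∪ {0}`.) -/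
def divisorialIdeal (R : Type*) [CommRing R] (K : Type*) [CommRing K] [Algebra R K]
    (D : WeilDivisor R) : Submodule R K :=
  Submodule.span R (divisorialSet R K D)

/-- The set of principal Weil divisors `div(f)`, `f ∈ K^×`. -/
def principalDivisors (R : Type*) [CommRing R] (K : Type*) [CommRing K] [Algebra R K] :
    Set (WeilDivisor R) :=
  {D | ∃ f : K, f ≠ 0 ∧ ∀ P : HeightOnePrime R, (D P : ℤ) = valAt R K P.1 f}

/-- The divisor class group: Weil divisors modulo principal divisors. -/
def WeilClassGroup (R : Type*) [CommRing R] (K : Type*) [CommRing K] [Algebra R K] :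
    Type _ :=
  WeilDivisor R ⧸ AddSubgroup.closure (principalDivisors R K)

instance (R : Type*) [CommRing R] (K : Type*) [CommRing K] [Algebra R K] :
    AddCommGroup (WeilClassGroup R K) :=
  inferInstanceAs (AddCommGroup (WeilDivisor R ⧸ AddSubgroup.closure (principalDivisors R K)))

/-- Two Weil divisors are linearly equivalent if they differ by a principal divisor. -/
def LinearlyEquivalent (R : Type*) [CommRing R] (K : Type*) [CommRing K] [Algebra R K]
    (D₁ D₂ : WeilDivisor R) : Prop :=
  D₁ - D₂ ∈ AddSubgroup.closure (principalDivisors R K)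

/-- A Weil divisor is torsion if a nonzero multiple of it is principal. -/
def IsTorsionDivisor (R : Type*) [CommRing R] (K : Type*) [CommRing K] [Algebra R K]
    (D : WeilDivisor R) : Prop :=
  ∃ n : ℤ, n ≠ 0 ∧ n • D ∈ AddSubgroup.closure (principalDivisors R K)

/-- The depth of `M` with respect to the ideal `I`: the supremum of lengths of
regular sequences on `M` contained in `I`. -/
def depthIn (R : Type*) [CommRing R] (I : Ideal R)
    (M : Type*) [AddCommGroup M] [Module R M] : ℕ∞ :=
  sSup {n : ℕ∞ | ∃ rs : List R, (rs.length : ℕ∞) = n ∧ (∀ r ∈ rs, r ∈ I) ∧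
    RingTheory.Sequence.IsRegular M rs}

/-- A finitely generated module over a Noetherian local ring is maximal Cohen–Macaulay if
its depth equals the Krull dimension of the ring. -/
def IsMaximalCohenMacaulay (R : Type*) [CommRing R] [IsLocalRing R]
    (M : Type*) [AddCommGroup M] [Module R M] : Prop :=
  (depthIn R (IsLocalRing.maximalIdeal R) M : WithBot ℕ∞) = ringKrullDim R

/-- Serre's condition `(S₂)` for a module. -/
def IsS2 (R : Type*) [CommRing R] (M : Type*) [AddCommGroup M] [Module R M] : Prop :=
  ∀ P : PrimeSpectrum R,
    haveI := P.isPrime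
    min 2 (ringKrullDim (Localization.AtPrime P.asIdeal)) ≤
      (depthIn (Localization.AtPrime P.asIdeal)
        (IsLocalRing.maximalIdeal (Localization.AtPrime P.asIdeal))
        (LocalizedModule P.asIdeal.primeCompl M) : WithBot ℕ∞)

end

open Filter MvPolynomial

/-!
For a nonzerodivisor `b`, `r ↦ r * b` identifies `R` with `⟨b⟩`, so
`F^e_*⟨a⟩ ⊗ ⟨b⟩ ≅ F^e_*⟨a⟩ ⊗ R ≅ F^e_*⟨a⟩`, the last map sending `x ⊗ s` to `s • x = s^(p^e) x`.
Multiplication by the nonzerodivisor `b^(p^e)` then identifies `⟨a⟩` with `⟨a b^(p^e)⟩`, and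
`x ⊗ s b ↦ s^(p^e) x b^(p^e) = x (s b)^(p^e)`. Taking `a = π^n`, `b = π^m` gives the theorem; in a
domain `π^m` is either a nonzerodivisor or `0`, and in the latter case both sides vanish.
-/

open scoped nonZeroDivisors

namespace FrobMod

variable {R : Type*} [CommSemiring R] {p : ℕ} [ExpChar R p] {e : ℕ}
variable {M N : Type*} [AddCommMonoid M] [Module R M] [AddCommMonoid N] [Module R N]

instance [Subsingleton M] : Subsingleton (FrobMod R p e M) := ‹Subsingleton M›

@[simp]
theorem un_zero : un (0 : FrobMod R p e M) = 0 := rfl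

def congr (f : M ≃ₗ[R] N) : FrobMod R p e M ≃ₗ[R] FrobMod R p e N where
  toFun z := mk R p e (f (un z))
  invFun z := mk R p e (f.symm (un z))
  map_add' z w := f.map_add (un z) (un w)
  map_smul' r z := f.map_smul (r ^ p ^ e) (un z)
  left_inv z := f.symm_apply_apply (un z)
  right_inv z := f.apply_symm_apply (un z)

end FrobMod

namespace Ideal

variable {R : Type*} [CommRing R]

noncomputable def spanSingletonEquivOfMemNonZeroDivisors {b : R} (hb : b ∈ R⁰) :
    R ≃ₗ[R] span {b} :=
  (LinearEquiv.ofInjective (LinearMap.toSpanSingleton R R b)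
    (isRegular_iff_mem_nonZeroDivisors.mpr hb).right).trans
    (LinearEquiv.ofEq _ _ (LinearMap.range_toSpanSingleton b))

theorem spanSingletonEquivOfMemNonZeroDivisors_symm_mul {b : R} (hb : b ∈ R⁰) (y : span {b}) :
    (spanSingletonEquivOfMemNonZeroDivisors hb).symm y * b = y :=
  congrArg Subtype.val ((spanSingletonEquivOfMemNonZeroDivisors hb).apply_symm_apply y)

noncomputable def spanSingletonMulRightEquiv (a : R) {c : R} (hc : c ∈ R⁰) :
    span {a} ≃ₗ[R] span {a * c} :=
  (Submodule.equivMapOfInjective (LinearMap.mulRight R c)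
    (isRegular_iff_mem_nonZeroDivisors.mpr hc).right _).trans
    (LinearEquiv.ofEq _ _ (by rw [Submodule.map_span, Set.image_singleton]; rfl))

end Ideal

open FrobMod

section

variable {R : Type*} [CommRing R] {p : ℕ} [ExpChar R p] (e : ℕ)

noncomputable def frobTensorSpanSingletonEquiv (a : R) {b : R} (hb : b ∈ R⁰) :
    FrobMod R p e (Ideal.span {a}) ⊗[R] Ideal.span {b} ≃ₗ[R]
      FrobMod R p e (Ideal.span {a * b ^ p ^ e}) :=
  LinearEquiv.lTensor _ (Ideal.spanSingletonEquivOfMemNonZeroDivisors hb).symm ≪≫ₗ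
    TensorProduct.rid R _ ≪≫ₗ FrobMod.congr (Ideal.spanSingletonMulRightEquiv a (pow_mem hb _))

theorem coe_un_frobTensorSpanSingletonEquiv_tmul (a : R) {b : R} (hb : b ∈ R⁰)
    (x : Ideal.span {a}) (y : Ideal.span {b}) :
    ((un (frobTensorSpanSingletonEquiv e a hb (mk R p e x ⊗ₜ y)) : Ideal.span {a * b ^ p ^ e}) :
      R) = x * y ^ p ^ e := by
  set s := (Ideal.spanSingletonEquivOfMemNonZeroDivisors hb).symm y
  have hs : s * b = y := Ideal.spanSingletonEquivOfMemNonZeroDivisors_symm_mul hb y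
  calc ((un (frobTensorSpanSingletonEquiv e a hb (mk R p e x ⊗ₜ y)) :
          Ideal.span {a * b ^ p ^ e}) : R)
      = s ^ p ^ e * x * b ^ p ^ e := rfl
    _ = x * y ^ p ^ e := by rw [← hs, mul_pow]; ring

theorem exists_frobTensorSpanSingletonEquiv [IsDomain R] (a b : R) :
    ∃ φ : FrobMod R p e (Ideal.span {a}) ⊗[R] Ideal.span {b} ≃ₗ[R]
        FrobMod R p e (Ideal.span {a * b ^ p ^ e}),
      ∀ (x : Ideal.span {a}) (y : Ideal.span {b}),
        ((un (φ (mk R p e x ⊗ₜ y)) : Ideal.span {a * b ^ p ^ e}) : R) = x * y ^ p ^ e := by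
  rcases eq_or_ne b 0 with rfl | hb
  · rw [zero_pow (expChar_pow_pos R p e).ne', mul_zero, Ideal.span_singleton_zero]
    refine ⟨LinearEquiv.ofSubsingleton _ _, fun x y => ?_⟩
    simp [Subsingleton.elim y 0, (expChar_pos R p).ne']
  · exact ⟨_, coe_un_frobTensorSpanSingletonEquiv_tmul e a (mem_nonZeroDivisors_of_ne_zero hb)⟩

end

theorem stmt0_general (R : Type*) [CommRing R] [IsDomain R]
    (p : ℕ) [ExpChar R p] (π : R) (n m e : ℕ) :
    ∃ φ : (TensorProduct R (FrobMod R p e (Ideal.span {π ^ n})) (Ideal.span {π ^ m})) ≃ₗ[R]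
        FrobMod R p e (Ideal.span {π ^ (n + m * p ^ e)}),
      ∀ (x : Ideal.span {π ^ n}) (y : Ideal.span {π ^ m}),
        ((FrobMod.un (φ (FrobMod.mk R p e x ⊗ₜ[R] y)) :
            Ideal.span {π ^ (n + m * p ^ e)}) : R) = (x : R) * (y : R) ^ p ^ e := by
  obtain ⟨φ, hφ⟩ := exists_frobTensorSpanSingletonEquiv (p := p) e (π ^ n) (π ^ m)
  have hspan : Ideal.span {π ^ n * (π ^ m) ^ p ^ e} = Ideal.span {π ^ (n + m * p ^ e)} := by
    rw [pow_add, pow_mul]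
  exact ⟨φ ≪≫ₗ FrobMod.congr (LinearEquiv.ofEq _ _ hspan), hφ⟩

theorem stmt0 (R : Type*) [CommRing R] [IsDomain R] [IsPrincipalIdealRing R] [IsLocalRing R]
    (p : ℕ) (hp : p.Prime) [CharP R p] [ExpChar R p] (π : R)
    (hπ : IsLocalRing.maximalIdeal R = Ideal.span {π}) (n m e : ℕ) :
    ∃ φ : (TensorProduct R (FrobMod R p e (Ideal.span {π ^ n})) (Ideal.span {π ^ m})) ≃ₗ[R]
        FrobMod R p e (Ideal.span {π ^ (n + m * p ^ e)}),
      ∀ (x : Ideal.span {π ^ n}) (y : Ideal.span {π ^ m}),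
        ((FrobMod.un (φ (FrobMod.mk R p e x ⊗ₜ[R] y)) :
            Ideal.span {π ^ (n + m * p ^ e)}) : R) = (x : R) * (y : R) ^ p ^ e :=
  stmt0_general R p π n m e
end

section
/- Let R be a Noetherian normal domain with fraction field K, and let D₁, D₂ be Weil divisors on Spec(R). Then Hom_R(R(D₁), R(D₂)) is isomorphic as an R-module to R(D₂ − D₁), where R(D) = {f ∈ K^× : div(f) + D ≥ 0} ∪ {0} is the divisorial ideal of D. -/
open Classical TensorProduct

open Filter MvPolynomial

/-! For a height-one prime `P` of a Noetherian normal domain the localization `R_P` is a discrete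
valuation ring and `ordAt R P` is its valuation, so `ν_P` is a discrete valuation on `K` and
`R(D)` is an `R`-submodule of `K`. An `R`-linear map between nonzero `R`-submodules `I, J` of `K`
is multiplication by an element of `K`, whence `Hom_R(I, J) ≅ (J : I)`. It remains to show
`(R(D₂) : R(D₁)) = R(D₂ - D₁)`. The nontrivial inclusion needs, for each `P`, some
`f ∈ R(D₁)` with `ν_P(f) = -D₁(P)` exactly; it is `a / b`, where `a` is chosen by a weak
approximation argument on the finitely many primes where `D₁` or `b` is nonzero. -/

theorem IsFractionRing.exists_eq_div_of_ne_zero {R K : Type*} [CommRing R] [IsDomain R] [Field K]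
    [Algebra R K] [IsFractionRing R K] {f : K} (hf : f ≠ 0) :
    ∃ a b : R, a ≠ 0 ∧ b ≠ 0 ∧ algebraMap R K a / algebraMap R K b = f := by
  obtain ⟨a, b, hb, rfl⟩ := IsFractionRing.div_surjective R f
  exact ⟨a, b, fun ha => hf (by simp [ha]), nonZeroDivisors.ne_zero hb, rfl⟩

namespace Submodule

variable {R K : Type*} [CommRing R] [Field K] [Algebra R K] [IsFractionRing R K]
  {I J : Submodule R K}

theorem linearMap_apply_mul_comm (φ : I →ₗ[R] J) (x y : I) :
    (φ x : K) * y = (φ y : K) * x := by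
  obtain ⟨⟨a, s⟩, hxs⟩ := IsLocalization.surj (nonZeroDivisors R) (x : K)
  obtain ⟨⟨b, t⟩, hyt⟩ := IsLocalization.surj (nonZeroDivisors R) (y : K)
  simp only at hxs hyt
  have hst : algebraMap R K (s * t) ≠ 0 := (IsLocalization.map_units K (s * t)).ne_zero
  have hsmul : (b * s) • x = (a * t) • y := by
    ext
    simp only [coe_smul, Algebra.smul_def, map_mul, ← hxs, ← hyt]
    ring
  have hφ : algebraMap R K (b * s) * φ x = algebraMap R K (a * t) * φ y := by
    simpa only [map_smul, coe_smul, Algebra.smul_def] using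
      congrArg (fun z : J => (z : K)) (congrArg φ hsmul)
  apply mul_left_cancel₀ hst
  simp only [map_mul] at hφ ⊢
  linear_combination (algebraMap R K s * φ x) * hyt + hφ - (algebraMap R K t * φ y) * hxs

variable (I J) in
def divToLinearMap : ↥(J / I) →ₗ[R] I →ₗ[R] J :=
  LinearMap.mk₂ R (fun f x => ⟨f * x, mem_div_iff_forall_mul_mem.1 f.2 x x.2⟩)
    (fun f g x => Subtype.ext (add_mul (f : K) g x))
    (fun r f x => Subtype.ext (smul_mul_assoc r (f : K) x))
    (fun f x y => Subtype.ext (mul_add (f : K) x y))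
    (fun r f x => Subtype.ext (mul_smul_comm r (f : K) x))

theorem divToLinearMap_bijective (hI : I ≠ ⊥) : Function.Bijective (divToLinearMap I J) := by
  obtain ⟨x₀, hx₀, hx₀_ne⟩ := I.exists_mem_ne_zero_of_ne_bot hI
  refine ⟨fun f g hfg => Subtype.ext ?_, fun φ => ?_⟩
  · exact mul_right_cancel₀ hx₀_ne (congrArg (fun ψ => (ψ ⟨x₀, hx₀⟩ : K)) hfg)
  · have hφ : ∀ y : I, (φ ⟨x₀, hx₀⟩ : K) / x₀ * y = φ y := fun y => by
      rw [div_mul_eq_mul_div, linearMap_apply_mul_comm φ ⟨x₀, hx₀⟩ y,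
        mul_div_cancel_right₀ _ hx₀_ne]
    refine ⟨⟨(φ ⟨x₀, hx₀⟩ : K) / x₀, mem_div_iff_forall_mul_mem.2 fun y hy => ?_⟩, ?_⟩
    · exact hφ ⟨y, hy⟩ ▸ (φ ⟨y, hy⟩).2
    · ext y
      exact hφ y

noncomputable def linearMapEquivDiv (hI : I ≠ ⊥) : (I →ₗ[R] J) ≃ₗ[R] ↥(J / I) :=
  (LinearEquiv.ofBijective _ (divToLinearMap_bijective hI)).symm

end Submodule

open IsDiscreteValuationRing

theorem IsDiscreteValuationRing.mem_maximalIdeal_pow_iff {A : Type*} [CommRing A] [IsDomain A]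
    [IsDiscreteValuationRing A] {x : A} (n : ℕ) :
    x ∈ IsLocalRing.maximalIdeal A ^ n ↔ (n : ℕ∞) ≤ addVal A x := by
  obtain ⟨ϖ, hϖ⟩ := exists_irreducible A
  rw [hϖ.maximalIdeal_eq, Ideal.span_singleton_pow, Ideal.mem_span_singleton,
    ← addVal_le_iff_dvd, hϖ.addVal_pow]

theorem Nat.sSup_setOf_natCast_le (v : ℕ∞) : sSup {n : ℕ | (n : ℕ∞) ≤ v} = v.toNat := by
  induction v using ENat.recTopCoe with
  | top =>
    exact Nat.sSup_of_not_bddAbove fun ⟨N, hN⟩ => by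
      simpa using hN (le_top : ((N + 1 : ℕ) : ℕ∞) ≤ ⊤)
  | coe k =>
    simp only [Nat.cast_le, ENat.toNat_natCast]
    exact csSup_Iic

namespace HeightOnePrime

section CommRing

variable {R : Type*} [CommRing R] (P : HeightOnePrime R)

instance : P.1.asIdeal.IsPrime := P.1.isPrime

abbrev Loc : Type _ := Localization.AtPrime P.1.asIdeal

theorem ext_asIdeal {P Q : HeightOnePrime R} (h : P.1.asIdeal = Q.1.asIdeal) : P = Q :=
  Subtype.ext (PrimeSpectrum.ext h)

theorem asIdeal_ne_bot : P.1.asIdeal ≠ ⊥ := by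
  intro h
  have hmin : IsMin P.1 := fun Q _ => show P.1.asIdeal ≤ Q.asIdeal from h ▸ bot_le
  simpa [Order.height_eq_zero.2 hmin] using P.2

end CommRing

section Domain

variable {R : Type*} [CommRing R] [IsDomain R] (P : HeightOnePrime R)

theorem eq_asIdeal_of_le {q : Ideal R} [hq : q.IsPrime] (hq0 : q ≠ ⊥) (hle : q ≤ P.1.asIdeal) :
    q = P.1.asIdeal := by
  by_contra hne
  let Q : PrimeSpectrum R := ⟨q, hq⟩
  have hQP : Q < P.1 := lt_of_le_of_ne hle fun h => hne (congrArg PrimeSpectrum.asIdeal h)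
  have hpos : 0 < Order.height Q := Order.height_pos_of_bot_lt
    (bot_lt_iff_ne_bot.2 fun h => hq0 (congrArg PrimeSpectrum.asIdeal h))
  have hlt := Order.height_strictMono hQP
    ((Order.height_mono hQP.le).trans_lt (by rw [P.2]; exact ENat.one_lt_top))
  rw [P.2, Order.lt_one_iff] at hlt
  exact (hlt ▸ hpos).false

theorem algebraMap_loc_injective : Function.Injective (algebraMap R (Loc P)) :=
  IsLocalization.injective _ P.1.asIdeal.primeCompl_le_nonZeroDivisors

theorem map_asIdeal_eq_top_of_ne {Q : HeightOnePrime R} (h : Q ≠ P) :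
    Q.1.asIdeal.map (algebraMap R (Loc P)) = ⊤ := by
  obtain ⟨q, hqQ, hqP⟩ := SetLike.not_le_iff_exists.mp fun hle =>
    h (ext_asIdeal (eq_asIdeal_of_le P (asIdeal_ne_bot Q) hle))
  exact Ideal.eq_top_of_isUnit_mem _ (Ideal.mem_map_of_mem _ hqQ)
    (IsLocalization.map_units (M := P.1.asIdeal.primeCompl) _ ⟨q, hqP⟩)

theorem finite_setOf_mem [IsNoetherianRing R] {b : R} (hb : b ≠ 0) :
    {Q : HeightOnePrime R | b ∈ Q.1.asIdeal}.Finite := by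
  have hfin : (Ideal.span {b}).minimalPrimes.Finite := by
    rw [Ideal.minimalPrimes_eq_comap]
    exact (minimalPrimes.finite_of_isNoetherianRing _).image _
  refine Set.Finite.of_finite_image (hfin.subset ?_) fun Q _ Q' _ h => ext_asIdeal h
  rintro _ ⟨Q, hQ, rfl⟩
  obtain ⟨p, hp, hpQ⟩ := Ideal.exists_minimalPrimes_le
    ((Ideal.span_singleton_le_iff_mem _).mpr hQ)
  have := hp.1.1
  have hp0 : p ≠ ⊥ := fun h => hb (by simpa [h] using hp.1.2 (Ideal.mem_span_singleton_self b))
  exact (eq_asIdeal_of_le Q hp0 hpQ ▸ hp :)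

end Domain

section Normal

variable {R : Type*} [CommRing R] [IsDomain R] [IsNoetherianRing R] [IsIntegrallyClosed R]
  (P : HeightOnePrime R)

instance : IsDiscreteValuationRing (Loc P) := by
  have hdim : Ring.KrullDimLE 1 (Loc P) := Ring.krullDimLE_iff.mpr <| by
    rw [IsLocalization.AtPrime.ringKrullDim_eq_height P.1.asIdeal,
      PrimeSpectrum.height_eq_orderHeight, P.2]
    rfl
  have : IsIntegrallyClosed (Loc P) := isIntegrallyClosed_of_isLocalization (Loc P)
    P.1.asIdeal.primeCompl P.1.asIdeal.primeCompl_le_nonZeroDivisors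
  have : IsNoetherianRing (Loc P) :=
    IsLocalization.isNoetherianRing P.1.asIdeal.primeCompl _ inferInstance
  have : IsPrincipalIdealRing (Loc P) := by
    have h := (tfae_of_isNoetherianRing_of_isLocalRing_of_isDomain (Loc P)).out 3 0
    refine h.mp ⟨‹_›, fun q hq0 hq => ?_⟩
    exact IsLocalRing.eq_maximalIdeal (Ring.krullDimLE_one_iff_of_noZeroDivisors.mp hdim q hq0 hq)
  refine { not_a_field' := ?_ }
  rw [← Localization.AtPrime.map_eq_maximalIdeal, ne_eq,
    Ideal.map_eq_bot_iff_of_injective (algebraMap_loc_injective P)]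
  exact asIdeal_ne_bot P

theorem ordAt_eq_toNat_addVal (a : R) :
    ordAt R P.1 a = (addVal (Loc P) (algebraMap R (Loc P) a)).toNat := by
  rw [ordAt, ← Nat.sSup_setOf_natCast_le]
  congr 1
  ext n
  simp only [Set.mem_ofPred_eq, Ideal.mem_comap, Ideal.map_pow,
    Localization.AtPrime.map_eq_maximalIdeal, mem_maximalIdeal_pow_iff]

theorem coe_ordAt {a : R} (ha : a ≠ 0) :
    (ordAt R P.1 a : ℕ∞) = addVal (Loc P) (algebraMap R (Loc P) a) := by
  rw [ordAt_eq_toNat_addVal, ENat.natCast_toNat]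
  rw [ne_eq, addVal_eq_top_iff, map_eq_zero_iff _ (algebraMap_loc_injective P)]
  exact ha

theorem le_ordAt_iff {a : R} (ha : a ≠ 0) (n : ℕ) :
    n ≤ ordAt R P.1 a ↔ algebraMap R (Loc P) a ∈ IsLocalRing.maximalIdeal (Loc P) ^ n := by
  rw [mem_maximalIdeal_pow_iff, ← coe_ordAt P ha, Nat.cast_le]

theorem le_ordAt_of_mem_pow {a : R} (ha : a ≠ 0) {n : ℕ} (h : a ∈ P.1.asIdeal ^ n) :
    n ≤ ordAt R P.1 a := by
  rw [le_ordAt_iff P ha, ← Localization.AtPrime.map_eq_maximalIdeal, ← Ideal.map_pow]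
  exact Ideal.mem_map_of_mem _ h

theorem ordAt_eq_zero_of_notMem {a : R} (h : a ∉ P.1.asIdeal) : ordAt R P.1 a = 0 := by
  rw [ordAt_eq_toNat_addVal, addVal_eq_zero_iff.mpr
    (IsLocalization.map_units (M := P.1.asIdeal.primeCompl) _ ⟨a, h⟩)]
  rfl

theorem ordAt_mul {a b : R} (ha : a ≠ 0) (hb : b ≠ 0) :
    ordAt R P.1 (a * b) = ordAt R P.1 a + ordAt R P.1 b := by
  have h : (ordAt R P.1 (a * b) : ℕ∞) = ordAt R P.1 a + ordAt R P.1 b := by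
    rw [coe_ordAt P (mul_ne_zero ha hb), coe_ordAt P ha, coe_ordAt P hb, map_mul, addVal_mul]
  exact_mod_cast h

theorem min_ordAt_le_ordAt_add {a b : R} (ha : a ≠ 0) (hb : b ≠ 0) (hab : a + b ≠ 0) :
    min (ordAt R P.1 a) (ordAt R P.1 b) ≤ ordAt R P.1 (a + b) := by
  rw [← Nat.cast_le (α := ℕ∞), Nat.mono_cast.map_min, coe_ordAt P ha, coe_ordAt P hb,
    coe_ordAt P hab, map_add]
  exact addVal_add

theorem exists_ordAt_eq (S : Finset (HeightOnePrime R)) (n : HeightOnePrime R → ℕ)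
    (hP : P ∈ S) :
    ∃ a : R, a ≠ 0 ∧ (∀ Q ∈ S, n Q ≤ ordAt R Q.1 a) ∧ ordAt R P.1 a = n P := by
  set J : Ideal R := ∏ Q ∈ S, Q.1.asIdeal ^ n Q
  have hJle : ∀ Q ∈ S, J ≤ Q.1.asIdeal ^ n Q := fun Q hQ =>
    Ideal.prod_le_inf.trans (Finset.inf_le hQ)
  have hJmap : J.map (algebraMap R (Loc P)) = IsLocalRing.maximalIdeal (Loc P) ^ n P := by
    change Ideal.mapHom _ J = _
    rw [map_prod, Finset.prod_eq_single_of_mem P hP]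
    · simp only [Ideal.mapHom_apply, Ideal.map_pow, Localization.AtPrime.map_eq_maximalIdeal]
    · intro Q _ hQP
      simp only [Ideal.mapHom_apply, Ideal.map_pow, map_asIdeal_eq_top_of_ne P hQP,
        Ideal.top_pow, Ideal.one_eq_top]
  obtain ⟨a, haJ, ha⟩ :
      ∃ a ∈ J, algebraMap R (Loc P) a ∉ IsLocalRing.maximalIdeal (Loc P) ^ (n P + 1) := by
    by_contra! h
    obtain ⟨ϖ, hϖ⟩ := exists_irreducible (Loc P)
    have hmem : ϖ ^ n P ∈ IsLocalRing.maximalIdeal (Loc P) ^ (n P + 1) :=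
      Ideal.map_le_iff_le_comap.2 h (hJmap ▸ Ideal.pow_mem_pow hϖ.not_isUnit _)
    rw [mem_maximalIdeal_pow_iff, hϖ.addVal_pow, Nat.cast_le] at hmem
    omega
  have ha0 : a ≠ 0 := by
    rintro rfl
    exact ha (by simp)
  refine ⟨a, ha0, fun Q hQ => le_ordAt_of_mem_pow Q ha0 (hJle Q hQ haJ),
    le_antisymm ?_ (le_ordAt_of_mem_pow P ha0 (hJle P hP haJ))⟩
  exact Nat.le_of_lt_succ (lt_of_not_ge fun h => ha ((le_ordAt_iff P ha0 _).1 h))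

variable {K : Type*} [Field K] [Algebra R K] [IsFractionRing R K]

theorem valAt_div {a b : R} (ha : a ≠ 0) (hb : b ≠ 0) :
    valAt R K P.1 (algebraMap R K a / algebraMap R K b) = ordAt R P.1 a - ordAt R P.1 b := by
  have hinj := IsFractionRing.injective R K
  have hb' : algebraMap R K b ≠ 0 := (map_ne_zero_iff _ hinj).2 hb
  have hex : ∃ cd : R × R, cd.2 ≠ 0 ∧
      algebraMap R K a / algebraMap R K b * algebraMap R K cd.2 = algebraMap R K cd.1 :=
    ⟨(a, b), hb, div_mul_cancel₀ _ hb'⟩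
  rw [valAt, dif_pos hex]
  obtain ⟨hd, hcd⟩ := hex.choose_spec
  set c := hex.choose.1
  set d := hex.choose.2
  have hcross : a * d = c * b := hinj <| by
    rw [map_mul, map_mul, ← hcd]
    field_simp
  have hc : c ≠ 0 := by
    rintro hc0
    rw [hc0, zero_mul, mul_eq_zero] at hcross
    tauto
  have h := congrArg (ordAt R P.1) hcross
  rw [ordAt_mul P ha hd, ordAt_mul P hc hb] at h
  omega

theorem valAt_algebraMap {a : R} (ha : a ≠ 0) :
    valAt R K P.1 (algebraMap R K a) = ordAt R P.1 a := by
  simpa [ordAt_eq_zero_of_notMem P (Ideal.IsPrime.one_notMem _)] using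
    valAt_div (K := K) P ha one_ne_zero

theorem valAt_mul {f g : K} (hf : f ≠ 0) (hg : g ≠ 0) :
    valAt R K P.1 (f * g) = valAt R K P.1 f + valAt R K P.1 g := by
  obtain ⟨a, b, ha, hb, rfl⟩ := IsFractionRing.exists_eq_div_of_ne_zero (R := R) hf
  obtain ⟨c, d, hc, hd, rfl⟩ := IsFractionRing.exists_eq_div_of_ne_zero (R := R) hg
  rw [div_mul_div_comm, ← map_mul, ← map_mul, valAt_div P (mul_ne_zero ha hc) (mul_ne_zero hb hd),
    valAt_div P ha hb, valAt_div P hc hd, ordAt_mul P ha hc, ordAt_mul P hb hd]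
  push_cast
  ring

theorem min_valAt_le_valAt_add {f g : K} (hf : f ≠ 0) (hg : g ≠ 0) (hfg : f + g ≠ 0) :
    min (valAt R K P.1 f) (valAt R K P.1 g) ≤ valAt R K P.1 (f + g) := by
  obtain ⟨a, b, ha, hb, rfl⟩ := IsFractionRing.exists_eq_div_of_ne_zero (R := R) hf
  obtain ⟨c, d, hc, hd, rfl⟩ := IsFractionRing.exists_eq_div_of_ne_zero (R := R) hg
  have hinj := IsFractionRing.injective R K
  rw [div_add_div _ _ ((map_ne_zero_iff _ hinj).2 hb) ((map_ne_zero_iff _ hinj).2 hd),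
    ← map_mul, ← map_mul, ← map_mul, ← map_add] at hfg ⊢
  have hnum : a * d + b * c ≠ 0 := fun h => hfg (by simp [h])
  have hmin := min_ordAt_le_ordAt_add P (mul_ne_zero ha hd) (mul_ne_zero hb hc) hnum
  rw [valAt_div P hnum (mul_ne_zero hb hd), valAt_div P ha hb, valAt_div P hc hd]
  rw [ordAt_mul P ha hd, ordAt_mul P hb hc] at hmin
  rw [ordAt_mul P hb hd]
  omega

end Normal

end HeightOnePrime

theorem mem_divisorialSet_iff {R K : Type*} [CommRing R] [CommRing K] [Algebra R K]
    {D : WeilDivisor R} {f : K} :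
    f ∈ divisorialSet R K D ↔ f = 0 ∨ ∀ P : HeightOnePrime R, 0 ≤ valAt R K P.1 f + D P :=
  Iff.rfl
section Divisorial

variable {R : Type*} [CommRing R] [IsDomain R] [IsNoetherianRing R] [IsIntegrallyClosed R]
  {K : Type*} [Field K] [Algebra R K] [IsFractionRing R K] {D : WeilDivisor R} {f g : K}

theorem add_mem_divisorialSet (hf : f ∈ divisorialSet R K D) (hg : g ∈ divisorialSet R K D) :
    f + g ∈ divisorialSet R K D := by
  rcases eq_or_ne f 0 with rfl | hf0
  · rwa [zero_add]
  rcases eq_or_ne g 0 with rfl | hg0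
  · rwa [add_zero]
  rcases eq_or_ne (f + g) 0 with hfg | hfg
  · exact Or.inl hfg
  refine Or.inr fun P => ?_
  have hmin := HeightOnePrime.min_valAt_le_valAt_add P hf0 hg0 hfg
  have hfP := (mem_divisorialSet_iff.1 hf).resolve_left hf0 P
  have hgP := (mem_divisorialSet_iff.1 hg).resolve_left hg0 P
  omega

theorem smul_mem_divisorialSet (r : R) (hf : f ∈ divisorialSet R K D) :
    r • f ∈ divisorialSet R K D := by
  rcases eq_or_ne r 0 with rfl | hr
  · exact Or.inl (zero_smul R f)
  rcases eq_or_ne f 0 with rfl | hf0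
  · exact Or.inl (smul_zero r)
  refine Or.inr fun P => ?_
  have hr' : algebraMap R K r ≠ 0 := (map_ne_zero_iff _ (IsFractionRing.injective R K)).2 hr
  have hfP := (mem_divisorialSet_iff.1 hf).resolve_left hf0 P
  rw [Algebra.smul_def, HeightOnePrime.valAt_mul P hr' hf0, HeightOnePrime.valAt_algebraMap P hr]
  omega

theorem mem_divisorialIdeal_iff : f ∈ divisorialIdeal R K D ↔ f ∈ divisorialSet R K D :=
  ⟨fun h => Submodule.span_induction (fun _ hx => hx) (Or.inl rfl)
    (fun _ _ _ _ => add_mem_divisorialSet) (fun r _ _ => smul_mem_divisorialSet r) h,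
    fun h => Submodule.subset_span h⟩

theorem exists_mem_divisorialSet_valAt_eq (D : WeilDivisor R) (P : HeightOnePrime R) :
    ∃ f : K, f ≠ 0 ∧ f ∈ divisorialSet R K D ∧ valAt R K P.1 f = -D P := by
  obtain ⟨x, hxP, hx0⟩ := Submodule.exists_mem_ne_zero_of_ne_bot P.asIdeal_ne_bot
  set b := x ^ (D P).toNat
  have hb0 : b ≠ 0 := pow_ne_zero _ hx0
  have hbP : (D P).toNat ≤ ordAt R P.1 b :=
    P.le_ordAt_of_mem_pow hb0 (Ideal.pow_mem_pow hxP _)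
  let S := D.support ∪ {P} ∪ (HeightOnePrime.finite_setOf_mem hb0).toFinset
  obtain ⟨a, ha0, haS, haP⟩ := P.exists_ordAt_eq S (fun Q => (ordAt R Q.1 b - D Q).toNat)
    (by simp [S])
  have hinj := IsFractionRing.injective R K
  refine ⟨algebraMap R K a / algebraMap R K b,
    div_ne_zero ((map_ne_zero_iff _ hinj).2 ha0) ((map_ne_zero_iff _ hinj).2 hb0),
    Or.inr fun Q => ?_, ?_⟩
  · rw [Q.valAt_div ha0 hb0]
    by_cases hQ : Q ∈ S
    · have := haS Q hQ
      omega
    · simp only [S, Finset.mem_union, Finsupp.mem_support_iff, Finset.mem_singleton,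
        Set.Finite.mem_toFinset, Set.mem_ofPred_eq, not_or, not_not] at hQ
      rw [hQ.1.1, Q.ordAt_eq_zero_of_notMem hQ.2]
      omega
  · rw [P.valAt_div ha0 hb0, haP]
    omega

theorem divisorialIdeal_ne_bot (D : WeilDivisor R) : divisorialIdeal R K D ≠ ⊥ := by
  rcases isEmpty_or_nonempty (HeightOnePrime R) with _ | ⟨⟨P⟩⟩
  · exact (Submodule.ne_bot_iff _).2
      ⟨1, mem_divisorialIdeal_iff.2 (Or.inr isEmptyElim), one_ne_zero⟩
  · obtain ⟨f, hf0, hf, -⟩ := exists_mem_divisorialSet_valAt_eq (K := K) D P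
    exact (Submodule.ne_bot_iff _).2 ⟨f, mem_divisorialIdeal_iff.2 hf, hf0⟩

theorem divisorialIdeal_sub_eq_div (D₁ D₂ : WeilDivisor R) :
    divisorialIdeal R K (D₂ - D₁) = divisorialIdeal R K D₂ / divisorialIdeal R K D₁ := by
  ext f
  simp only [Submodule.mem_div_iff_forall_mul_mem, mem_divisorialIdeal_iff, mem_divisorialSet_iff,
    Finsupp.coe_sub, Pi.sub_apply]
  rcases eq_or_ne f 0 with rfl | hf0
  · simp
  simp only [hf0, false_or]
  constructor
  · intro hf x hx
    rcases eq_or_ne x 0 with rfl | hx0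
    · simp
    refine Or.inr fun P => ?_
    have hxP := hx.resolve_left hx0 P
    rw [P.valAt_mul hf0 hx0]
    linarith [hf P]
  · intro h P
    obtain ⟨x, hx0, hx, hxP⟩ := exists_mem_divisorialSet_valAt_eq (K := K) D₁ P
    have := (h x hx).resolve_left (mul_ne_zero hf0 hx0) P
    rw [P.valAt_mul hf0 hx0, hxP] at this
    linarith

end Divisorial

theorem stmt1 (R : Type*) [CommRing R] [IsDomain R] [IsNoetherianRing R] [IsIntegrallyClosed R]
    (K : Type*) [Field K] [Algebra R K] [IsFractionRing R K] (D₁ D₂ : WeilDivisor R) :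
    Nonempty ((divisorialIdeal R K D₁ →ₗ[R] divisorialIdeal R K D₂) ≃ₗ[R]
      divisorialIdeal R K (D₂ - D₁)) := by
  rw [divisorialIdeal_sub_eq_div]
  exact ⟨Submodule.linearMapEquivDiv (divisorialIdeal_ne_bot D₁)⟩
end

section
/- Let (R, m, k) be a local normal domain, C a finitely generated (S₂) R-module, M a rank-1 module, and suppose C ≅ M^⊕a₁ ⊕ N₁ ≅ M^⊕a₂ ⊕ N₂ are direct sum decompositions such that M is not a direct summand of N₁ or of N₂. Then a₁ = a₂. -/
open Classical TensorProduct

open Filter MvPolynomial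

/-!
Condition (S₂) makes `C` torsion-free: a nonzero zero-divisor on `C` lies in an associated prime
`p ≠ 0`, and then `C_p` has depth `0` although `dim R_p ≥ 1`. Hence `M`, a retract of `C`, is
finite and torsion-free of rank one. Over `Frac R` every endomorphism of `M` becomes multiplication
by some `x`, which stabilizes the finitely generated lattice `M` and is therefore integral over `R`;
as `R` is normal, `End_R M = R`. Composing with the residue map `R → k` gives a ring map on
`End_R M` killing all non-units, in particular every endomorphism factoring through a module of
which `M` is not a direct summand. Writing the identity of `M^{a₂}` through
`C ≅ M^{a₁} ⊕ N₁` and reducing to `k` factors the identity matrix of size `a₂` through `k^{a₁}`,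
so `a₂ ≤ a₁`, and symmetrically.
-/

theorem depthIn_eq_zero_of_forall_not_isSMulRegular {R : Type*} [CommRing R] {I : Ideal R}
    {M : Type*} [AddCommGroup M] [Module R M] (h : ∀ r ∈ I, ¬IsSMulRegular M r) :
    depthIn R I M = 0 := by
  refine nonpos_iff_eq_zero.1 (sSup_le ?_)
  rintro n ⟨rs, rfl, hmem, hreg⟩
  cases rs with
  | nil => simp
  | cons r rs =>
    exact absurd ((RingTheory.Sequence.isWeaklyRegular_cons_iff M r rs).1
      hreg.toIsWeaklyRegular).1 (h r (hmem r List.mem_cons_self))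

theorem one_le_ringKrullDim_atPrime {R : Type*} [CommRing R] [IsDomain R] (p : Ideal R)
    [p.IsPrime] (hp : p ≠ ⊥) : 1 ≤ ringKrullDim (Localization.AtPrime p) := by
  rw [IsLocalization.AtPrime.ringKrullDim_eq_height p]
  exact_mod_cast Order.one_le_iff_pos.2 <|
    pos_iff_ne_zero.2 (Ideal.height_eq_zero_iff_eq_bot.not.2 hp)

theorem IsS2.isTorsionFree {R : Type*} [CommRing R] [IsDomain R] [IsNoetherianRing R]
    {C : Type*} [AddCommGroup C] [Module R C] (hC : IsS2 R C) : Module.IsTorsionFree R C := by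
  refine ⟨fun r hr => by_contra fun hreg => ?_⟩
  have hr' : r ∈ ⋃ p ∈ associatedPrimes R C, (p : Set R) := by
    rwa [biUnion_associatedPrimes_eq_compl_regular]
  obtain ⟨p, hp, hrp⟩ := Set.mem_iUnion₂.1 hr'
  have := IsAssociatedPrime.isPrime hp
  let Rₚ := Localization.AtPrime p
  have hdepth : depthIn Rₚ (IsLocalRing.maximalIdeal Rₚ) (LocalizedModule.AtPrime p C) = 0 := by
    refine depthIn_eq_zero_of_forall_not_isSMulRegular fun x hx hxreg => ?_
    have hx' : x ∈ ⋃ q ∈ associatedPrimes Rₚ (LocalizedModule.AtPrime p C), (q : Set Rₚ) :=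
      Set.mem_iUnion₂.2 ⟨_,
        Module.associatedPrimes.mem_associatedPrimes_atPrime_of_mem_associatedPrimes hp, hx⟩
    rw [biUnion_associatedPrimes_eq_compl_regular] at hx'
    exact hx' hxreg
  have hdim := one_le_ringKrullDim_atPrime p ((Submodule.ne_bot_iff p).2 ⟨r, hrp, hr.ne_zero⟩)
  have h2 := hC ⟨p, inferInstance⟩
  rw [hdepth] at h2
  exact absurd ((le_min (by norm_num) hdim).trans h2) (by norm_num)

theorem bijective_algebraMap_end_of_genRank_eq_one {R : Type*} [CommRing R] [IsDomain R]
    [IsIntegrallyClosed R] {M : Type*} [AddCommGroup M] [Module R M] [Module.Finite R M]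
    [Module.IsTorsionFree R M] (hM : genRank R M = 1) :
    Function.Bijective (algebraMap R (Module.End R M)) := by
  set K := FractionRing R
  set L := LocalizedModule (nonZeroDivisors R) M
  set ι : M →ₗ[R] L := LocalizedModule.mkLinearMap (nonZeroDivisors R) M
  have hι : Function.Injective ι :=
    (IsLocalizedModule.injective_iff_isRegular (nonZeroDivisors R) ι).2 fun c =>
      IsSMulRegular.of_ne_zero (nonZeroDivisors.coe_ne_zero c)
  have hL : Module.finrank K L = 1 := hM
  have : Nontrivial M := by
    by_contra h
    rw [not_nontrivial_iff_subsingleton] at h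
    have := IsLocalizedModule.subsingleton_of_subsingleton (nonZeroDivisors R) ι
    simp [Module.finrank_zero_of_subsingleton] at hL
  refine ⟨fun r s hrs => ?_, fun φ => ?_⟩
  · obtain ⟨m, hm⟩ := exists_ne (0 : M)
    have := congrArg (fun φ : Module.End R M => φ m) hrs
    simpa [Module.algebraMap_end_apply, smul_left_inj hm] using this
  · obtain ⟨x, hx, -⟩ := (IsLocalizedModule.mapExtendScalars (nonZeroDivisors R) ι ι K φ
      ).existsUnique_eq_smul_id_of_finrank_eq_one hL
    have hφ : ∀ m, ι (φ m) = x • ι m := fun m => by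
      simpa using congrArg (fun ψ : L →ₗ[K] L => ψ (ι m)) hx
    have hint : IsIntegral R x := by
      refine isIntegral_of_smul_mem_submodule (LinearMap.range ι) ?_ ?_ x ?_
      · obtain ⟨m, hm⟩ := exists_ne (0 : M)
        exact (Submodule.ne_bot_iff _).2 ⟨ι m, ⟨m, rfl⟩, fun h => hm (hι (by simpa using h))⟩
      · rw [LinearMap.range_eq_map]
        exact Module.Finite.fg_top.map ι
      · rintro _ ⟨m, rfl⟩
        exact ⟨φ m, hφ m⟩
    obtain ⟨r, rfl⟩ := IsIntegrallyClosed.isIntegral_iff.1 hint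
    refine ⟨r, LinearMap.ext fun m => hι ?_⟩
    rw [hφ, Module.algebraMap_end_apply, map_smul, algebraMap_smul]

section DirectSummand

variable {R : Type*} [CommRing R] {M N : Type*} [AddCommGroup M] [Module R M]
  [AddCommGroup N] [Module R N]

theorem isDirectSummand_of_comp_eq_id (f : M →ₗ[R] N) (g : N →ₗ[R] M)
    (h : g ∘ₗ f = LinearMap.id) : IsDirectSummand R M N := by
  have hgf : Function.LeftInverse g f := LinearMap.congr_fun h
  refine ⟨_, _, LinearMap.isCompl_of_proj (f := f.rangeRestrict ∘ₗ g) ?_,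
    ⟨(LinearEquiv.ofLeftInverse hgf).symm⟩⟩
  rintro ⟨_, m, rfl⟩
  ext
  simp [hgf m]

theorem not_isUnit_comp_of_not_isDirectSummand (hN : ¬IsDirectSummand R M N)
    (f : M →ₗ[R] N) (g : N →ₗ[R] M) : ¬IsUnit (g ∘ₗ f : Module.End R M) := by
  rintro ⟨u, hu⟩
  refine hN (isDirectSummand_of_comp_eq_id f (↑u⁻¹ ∘ₗ g) ?_)
  rw [LinearMap.comp_assoc, ← hu]
  exact u.inv_mul

theorem exists_ringHom_residueField_of_bijective_algebraMap [IsLocalRing R]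
    (h : Function.Bijective (algebraMap R (Module.End R M))) :
    ∃ χ : Module.End R M →+* IsLocalRing.ResidueField R, ∀ φ, ¬IsUnit φ → χ φ = 0 := by
  let τ := (RingEquiv.ofBijective _ h).symm
  refine ⟨(IsLocalRing.residue R).comp τ.toRingHom, fun φ hφ => ?_⟩
  refine (IsLocalRing.residue_eq_zero_iff _).2 fun hτφ => hφ ?_
  simpa [τ] using hτφ.map (RingEquiv.ofBijective _ h)

variable {C : Type*} [AddCommGroup C] [Module R C]

theorem exists_biproduct_maps_of_linearEquiv {ι : Type*} [Fintype ι] [DecidableEq ι]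
    (e : C ≃ₗ[R] (ι → M) × N) :
    ∃ (incl : ι → M →ₗ[R] C) (proj : ι → C →ₗ[R] M) (s : N →ₗ[R] C) (q : C →ₗ[R] N),
      ∑ i, incl i ∘ₗ proj i + s ∘ₗ q = LinearMap.id ∧
      ∀ i j, proj i ∘ₗ incl j = if i = j then LinearMap.id else 0 := by
  refine ⟨fun i => e.symm.toLinearMap ∘ₗ LinearMap.inl R _ N ∘ₗ
      LinearMap.single R (fun _ => M) i,
    fun i => LinearMap.proj i ∘ₗ LinearMap.fst R _ N ∘ₗ e.toLinearMap,
    e.symm.toLinearMap ∘ₗ LinearMap.inr R _ N, LinearMap.snd R _ N ∘ₗ e.toLinearMap, ?_, ?_⟩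
  · ext c
    apply e.injective
    simp [map_sum, Prod.ext_iff, Prod.fst_sum, Prod.snd_sum, Finset.univ_sum_single]
  · intro i j
    by_cases hij : i = j <;> ext m <;> simp [hij]

theorem card_le_of_biproduct_maps {K : Type*} [Field K] (χ : Module.End R M →+* K)
    (hχ : ∀ φ, ¬IsUnit φ → χ φ = 0) (hN : ¬IsDirectSummand R M N)
    {ι κ : Type*} [Fintype ι] [Fintype κ] [DecidableEq κ]
    (incl : ι → M →ₗ[R] C) (proj : ι → C →ₗ[R] M) (s : N →ₗ[R] C) (q : C →ₗ[R] N)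
    (hsum : ∑ i, incl i ∘ₗ proj i + s ∘ₗ q = LinearMap.id)
    (u : κ → M →ₗ[R] C) (v : κ → C →ₗ[R] M)
    (hvu : ∀ j l, v j ∘ₗ u l = if j = l then LinearMap.id else 0) :
    Fintype.card κ ≤ Fintype.card ι := by
  let A : Matrix ι κ K := Matrix.of fun i l => χ (proj i ∘ₗ u l)
  let B : Matrix κ ι K := Matrix.of fun j i => χ (v j ∘ₗ incl i)
  have hBA : B * A = 1 := by
    ext j l
    have hjl : v j ∘ₗ u l =
        ∑ i, (v j ∘ₗ incl i) * (proj i ∘ₗ u l) + (v j ∘ₗ s) ∘ₗ (q ∘ₗ u l) := by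
      ext m
      simpa [map_sum] using congr(v j ($hsum (u l m))).symm
    have hχjl := congrArg χ hjl
    rw [map_add, map_sum, hχ _ (not_isUnit_comp_of_not_isDirectSummand hN _ _), hvu] at hχjl
    simp only [map_mul, add_zero] at hχjl
    simp only [Matrix.mul_apply, Matrix.one_apply, A, B, Matrix.of_apply, ← hχjl]
    split_ifs <;> simp [← Module.End.one_eq_id]
  calc Fintype.card κ = (1 : Matrix κ κ K).rank := (Matrix.rank_one).symm
    _ = (B * A).rank := by rw [hBA]
    _ ≤ A.rank := Matrix.rank_mul_le_right B A
    _ ≤ Fintype.card ι := Matrix.rank_le_card_height A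

end DirectSummand

theorem card_le_card_of_linearEquiv_pi_prod {R : Type*} [CommRing R] [IsDomain R]
    [IsLocalRing R] [IsIntegrallyClosed R] {C M N₁ N₂ : Type*}
    [AddCommGroup C] [Module R C] [Module.Finite R C] [Module.IsTorsionFree R C]
    [AddCommGroup M] [Module R M] [AddCommGroup N₁] [Module R N₁]
    [AddCommGroup N₂] [Module R N₂] (hM : genRank R M = 1)
    {ι κ : Type*} [Fintype ι] [Fintype κ] [DecidableEq ι] [DecidableEq κ]
    (e₁ : C ≃ₗ[R] (ι → M) × N₁) (e₂ : C ≃ₗ[R] (κ → M) × N₂) (hN₁ : ¬IsDirectSummand R M N₁) :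
    Fintype.card κ ≤ Fintype.card ι := by
  rcases isEmpty_or_nonempty κ with _ | ⟨⟨l⟩⟩
  · simp
  obtain ⟨incl₁, proj₁, s₁, q₁, hsum₁, -⟩ := exists_biproduct_maps_of_linearEquiv e₁
  obtain ⟨incl₂, proj₂, -, -, -, hpi₂⟩ := exists_biproduct_maps_of_linearEquiv e₂
  have hretract : Function.LeftInverse (proj₂ l) (incl₂ l) := fun m => by
    simpa using LinearMap.congr_fun (hpi₂ l l) m
  have : Module.Finite R M := Module.Finite.of_surjective _ hretract.surjective
  have : Module.IsTorsionFree R M :=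
    hretract.injective.moduleIsTorsionFree _ (map_smul (incl₂ l))
  obtain ⟨χ, hχ⟩ := exists_ringHom_residueField_of_bijective_algebraMap
    (bijective_algebraMap_end_of_genRank_eq_one hM)
  exact card_le_of_biproduct_maps χ hχ hN₁ incl₁ proj₁ s₁ q₁ hsum₁ incl₂ proj₂ hpi₂

theorem stmt8 (R : Type*) [CommRing R] [IsDomain R] [IsNoetherianRing R] [IsLocalRing R]
    [IsIntegrallyClosed R]
    (C : Type*) [AddCommGroup C] [Module R C] [Module.Finite R C] (hC : IsS2 R C)
    (M : Type*) [AddCommGroup M] [Module R M] (hM : genRank R M = 1)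
    (N₁ : Type*) [AddCommGroup N₁] [Module R N₁]
    (N₂ : Type*) [AddCommGroup N₂] [Module R N₂]
    (a₁ a₂ : ℕ)
    (h₁ : Nonempty (C ≃ₗ[R] ((Fin a₁ → M) × N₁))) (h₂ : Nonempty (C ≃ₗ[R] ((Fin a₂ → M) × N₂)))
    (hn₁ : ¬ IsDirectSummand R M N₁) (hn₂ : ¬ IsDirectSummand R M N₂) :
    a₁ = a₂ := by
  obtain ⟨e₁⟩ := h₁
  obtain ⟨e₂⟩ := h₂
  have := hC.isTorsionFree
  simpa using le_antisymm (card_le_card_of_linearEquiv_pi_prod hM e₂ e₁ hn₂)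
    (card_le_card_of_linearEquiv_pi_prod hM e₁ e₂ hn₁)
end
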